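/- arXiv:1807.08627 — 2 statements merged into one kernel-verified Lean document; each statement's English description precedes it below -/
import Mathlib

section
/- Let F be an m×m symmetric positive definite real matrix, h a nonzero vector in R^m, and σ > 0. Then Tr((F + σ^{-2} h h^T)^{-1}) < Tr(F^{-1}); that is, adding a rank-one measurement strictly decreases the trace of the inverse. -/
open Matrix

lemma myVecMulVec_mul {n : ℕ} (w v : Fin n → ℝ) (M : Matrix (Fin n) (Fin n) ℝ) :
    vecMulVec w v * M = vecMulVec w (v ᵥ* M) := by
  ext i j
  simp [vecMulVec_apply, mul_apply, vecMul, dotProduct, Finset.mul_sum, mul_assoc]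

lemma myMul_vecMulVec {n : ℕ} (M : Matrix (Fin n) (Fin n) ℝ) (w v : Fin n → ℝ) :
    M * vecMulVec w v = vecMulVec (M *ᵥ w) v := by
  ext i j
  simp [vecMulVec_apply, mul_apply, mulVec, dotProduct, Finset.sum_mul, mul_assoc]

lemma myVecMulVec_mul_vecMulVec {n : ℕ} (a b c d : Fin n → ℝ) :
    vecMulVec a b * vecMulVec c d = (b ⬝ᵥ c) • vecMulVec a d := by
  ext i j
  simp only [mul_apply, vecMulVec_apply, Matrix.smul_apply, dotProduct, smul_eq_mul,
    Finset.sum_mul, Finset.mul_sum]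
  apply Finset.sum_congr rfl
  intro k _
  ring

lemma myTrace_vecMulVec {n : ℕ} (a b : Fin n → ℝ) :
    (vecMulVec a b).trace = a ⬝ᵥ b := by
  simp [trace, vecMulVec_apply, dotProduct, diag]

/-- Adding a rank-one measurement strictly decreases the trace of the inverse. -/
theorem stmt_1 {m : ℕ} (F : Matrix (Fin m) (Fin m) ℝ) (hF : F.PosDef)
    (h : Fin m → ℝ) (hh : h ≠ 0) (σ : ℝ) (hσ : 0 < σ) :
    ((F + (σ ^ 2)⁻¹ • vecMulVec h h)⁻¹).trace < (F⁻¹).trace := by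
  set c : ℝ := (σ ^ 2)⁻¹ with hc
  have hcpos : 0 < c := by positivity
  set A := F⁻¹ with hAdef
  have hA : A.PosDef := hF.inv
  have hAsymm : Aᵀ = A := by
    have := hA.isHermitian
    simpa [Matrix.IsHermitian, conjTranspose_eq_transpose_of_trivial] using this
  set q : ℝ := h ⬝ᵥ A *ᵥ h with hq
  have hqpos : 0 < q := by
    have := hA.dotProduct_mulVec_pos hh
    simpa [hq] using this
  have hden : 0 < 1 + c * q := by positivity
  set d : ℝ := c / (1 + c * q) with hd
  have hdpos : 0 < d := by positivity
  set H := vecMulVec h h with hH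
  set G := A - d • (A * H * A) with hG
  have hFA : F * A = 1 := by
    rw [hAdef]
    exact mul_nonsing_inv F (isUnit_iff_ne_zero.mpr hF.det_pos.ne')
  -- key identity H * A * H = q • H
  have hHAH : H * A * H = q • H := by
    rw [hH, myVecMulVec_mul, myVecMulVec_mul_vecMulVec, hq, dotProduct_mulVec]
  have hright : (F + c • H) * G = 1 := by
    rw [hG]
    have e1 : F * (A * H * A) = H * A := by
      rw [← Matrix.mul_assoc, ← Matrix.mul_assoc, hFA, Matrix.one_mul]
    have e2 : H * (A * H * A) = (q * 1) • (H * A) := by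
      rw [← Matrix.mul_assoc, ← Matrix.mul_assoc, hHAH, Matrix.smul_mul, mul_one]
    rw [Matrix.add_mul, Matrix.mul_sub, Matrix.smul_mul, Matrix.mul_sub, hFA,
      Matrix.mul_smul, Matrix.mul_smul, e1, e2]
    have key : c • (H * A - d • (q * 1) • (H * A)) - d • (H * A)
        = (c - c * (d * (q * 1)) - d) • (H * A) := by
      rw [sub_smul, sub_smul, smul_sub, smul_smul, smul_smul]; ring_nf
    have hz : c - c * (d * (q * 1)) - d = 0 := by
      rw [hd]
      field_simp
      ring
    rw [sub_add_eq_add_sub, add_sub_assoc, key, hz, zero_smul, add_zero]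
  have hinv : (F + c • H)⁻¹ = G := inv_eq_right_inv hright
  rw [hinv, hG]
  have hAHA : A * H * A = vecMulVec (A *ᵥ h) (A *ᵥ h) := by
    rw [hH, myMul_vecMulVec, myVecMulVec_mul, ← hAsymm, ← Matrix.mulVec_transpose,
      hAsymm, hAsymm]
  have hAh : A *ᵥ h ≠ 0 := by
    intro h0
    rw [hq, h0, dotProduct_zero] at hqpos
    exact lt_irrefl 0 hqpos
  have htpos : 0 < (A *ᵥ h) ⬝ᵥ (A *ᵥ h) := by
    rcases lt_or_eq_of_le (Finset.sum_nonneg (fun i _ => mul_self_nonneg ((A *ᵥ h) i)) :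
      (0:ℝ) ≤ (A *ᵥ h) ⬝ᵥ (A *ᵥ h)) with hlt | heq
    · exact hlt
    · exact absurd (dotProduct_self_eq_zero.mp heq.symm) hAh
  rw [trace_sub, trace_smul, hAHA, myTrace_vecMulVec]
  have : (0:ℝ) < d * ((A *ᵥ h) ⬝ᵥ (A *ᵥ h)) := mul_pos hdpos htpos
  simpa using sub_lt_self A.trace this
end

section
/- Let f : 2^X → R be a monotone non-decreasing set function on a finite set X, let S ⊂ T ⊆ X with |T \ S| = r ≥ 1, and let C_1, …, C_{r−1} be constants such that for all subsets A ⊂ B ⊂ X with |B \ A| = l and all i ∉ B, f(B ∪ {i}) − f(B) ≤ C_l (f(A ∪ {i}) − f(A)). Then f(T) − f(S) ≤ (1/r)(1 + Σ_{l=1}^{r−1} C_l) · Σ_{j ∈ T\S} (f(S ∪ {j}) − f(S)). -/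
/-- Lemma 2 of the paper: bound on f(T) − f(S) via element-wise curvatures. -/
theorem stmt_6 {X : Type*} [Fintype X] [DecidableEq X]
    (f : Finset X → ℝ)
    (hmono : ∀ A B : Finset X, A ⊆ B → f A ≤ f B)
    (S T : Finset X) (hST : S ⊂ T)
    (r : ℕ) (hr : r = (T \ S).card) (hr1 : 1 ≤ r)
    (C : ℕ → ℝ) (hCpos : ∀ l, 0 < C l)
    (hcurv : ∀ (A B : Finset X) (i : X), A ⊂ B → B ⊂ Finset.univ → i ∉ B →
      ∀ l, (B \ A).card = l →
        f (insert i B) - f B ≤ C l * (f (insert i A) - f A)) :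
    f T - f S ≤ (1 / (r : ℝ)) * (1 + ∑ l ∈ Finset.Icc 1 (r - 1), C l) *
      ∑ j ∈ T \ S, (f (insert j S) - f S) := by
  have hrpos : 0 < r := hr1
  set D := T \ S with hD
  have hcard : D.card = r := hr.symm
  set g : X → ℝ := fun j => f (insert j S) - f S with hg
  set c : ℕ → ℝ := fun l => if l = 0 then 1 else C l with hc
  -- the enumeration of D, extended periodically
  set e : ℕ → X := fun t =>
    (D.equivFin.symm ⟨t % r, by rw [hcard]; exact Nat.mod_lt _ hrpos⟩ : X) with he
  have hemem : ∀ t, e t ∈ D := fun t => (D.equivFin.symm _).2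
  have hnotS : ∀ t, e t ∉ S := fun t => (Finset.mem_sdiff.mp (hemem t)).2
  have heinj : ∀ a b, e a = e b → a % r = b % r := by
    intro a b h
    have h2 := D.equivFin.symm.injective (Subtype.coe_injective h)
    simpa using congrArg Fin.val h2
  have hee : ∀ a b : ℕ, a % r = b % r → e a = e b := by
    intro a b h
    simp only [he, h]
  have heper : ∀ t, e (t + r) = e t := fun t => hee _ _ (Nat.add_mod_right t r)
  have hesurj : ∀ j ∈ D, ∃ t < r, e t = j := by
    intro j hj
    have hlt : (D.equivFin ⟨j, hj⟩).val < r := by rw [← hcard]; exact (D.equivFin ⟨j, hj⟩).2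
    refine ⟨(D.equivFin ⟨j, hj⟩).val, hlt, ?_⟩
    have h1 : (⟨(D.equivFin ⟨j, hj⟩).val % r,
        lt_of_lt_of_le (Nat.mod_lt _ hrpos) hcard.ge⟩ :
        Fin D.card) = D.equivFin ⟨j, hj⟩ := by
      ext
      simp [Nat.mod_eq_of_lt hlt]
    simp only [he, h1, Equiv.symm_apply_apply]
  -- the chain bound
  have chain : ∀ k, k ≤ r → ∀ s : ℕ,
      f (S ∪ (Finset.range k).image (fun i => e (s + i))) - f S
        ≤ ∑ l ∈ Finset.range k, c l * g (e (s + l)) := by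
    intro k
    induction k with
    | zero => intro _ s; simp
    | succ k ih =>
      intro hk s
      have hk' : k ≤ r := Nat.le_of_succ_le hk
      have hkr : k < r := hk
      set P := S ∪ (Finset.range k).image (fun i => e (s + i)) with hP
      have hPins : S ∪ (Finset.range (k+1)).image (fun i => e (s + i))
          = insert (e (s + k)) P := by
        rw [Finset.range_add_one, Finset.image_insert, Finset.union_insert]
      have hmodinj : ∀ a b, a < r → b < r → e (s + a) = e (s + b) → a = b := by
        intro a b ha hb hsab
        have h2 : (s + a) % r = (s + b) % r := heinj _ _ hsab
        have h3 : a % r = b % r := Nat.ModEq.add_left_cancel' s h2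
        rwa [Nat.mod_eq_of_lt ha, Nat.mod_eq_of_lt hb] at h3
      have hnotP : e (s + k) ∉ P := by
        simp only [hP, Finset.mem_union, Finset.mem_image, Finset.mem_range]
        push_neg
        refine ⟨hnotS _, fun i hi hcontra => ?_⟩
        have := hmodinj i k (lt_trans hi hkr) hkr hcontra
        omega
      have hstep : f (insert (e (s + k)) P) - f P ≤ c k * g (e (s + k)) := by
        rcases Nat.eq_zero_or_pos k with hk0 | hk1
        · subst hk0
          simp only [hP, Finset.range_zero, Finset.image_empty, Finset.union_empty, hc, hg,
            if_pos rfl, one_mul]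
          exact le_refl _
        · have hSP : S ⊂ P := by
            refine (Finset.ssubset_iff_of_subset Finset.subset_union_left).mpr
              ⟨e (s + 0), ?_, hnotS _⟩
            exact Finset.mem_union_right _ (Finset.mem_image.mpr
              ⟨0, Finset.mem_range.mpr hk1, rfl⟩)
          have hPuniv : P ⊂ Finset.univ := by
            refine Finset.ssubset_univ_iff.mpr (fun hcon => hnotP ?_)
            rw [hcon]; exact Finset.mem_univ _
          have hPsd : P \ S = (Finset.range k).image (fun i => e (s + i)) := by
            ext x
            simp only [hP, Finset.mem_sdiff, Finset.mem_union, Finset.mem_image,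
              Finset.mem_range]
            constructor
            · rintro ⟨hx1 | hx2, hx3⟩
              · exact absurd hx1 hx3
              · exact hx2
            · rintro ⟨i, hi, rfl⟩
              exact ⟨Or.inr ⟨i, hi, rfl⟩, hnotS _⟩
          have hcardPS : (P \ S).card = k := by
            rw [hPsd, Finset.card_image_of_injOn, Finset.card_range]
            intro a ha b hb hab
            simp only [Finset.mem_coe, Finset.mem_range] at ha hb
            exact hmodinj a b (lt_trans ha hkr) (lt_trans hb hkr) hab
          have := hcurv S P (e (s + k)) hSP hPuniv hnotP k hcardPS
          simpa only [hc, hg, if_neg (Nat.pos_iff_ne_zero.mp hk1)] using this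
      calc f (S ∪ (Finset.range (k+1)).image (fun i => e (s + i))) - f S
          = (f (insert (e (s + k)) P) - f P) + (f P - f S) := by rw [hPins]; ring
        _ ≤ c k * g (e (s + k)) + ∑ l ∈ Finset.range k, c l * g (e (s + l)) :=
            add_le_add hstep (ih hk' s)
        _ = ∑ l ∈ Finset.range (k+1), c l * g (e (s + l)) := by
            rw [Finset.sum_range_succ]; ring
  -- image of each window is D
  have himage : ∀ s, (Finset.range r).image (fun i => e (s + i)) = D := by
    intro s
    apply Finset.Subset.antisymm
    · intro x hx
      obtain ⟨i, _, rfl⟩ := Finset.mem_image.mp hx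
      exact hemem _
    · intro j hj
      obtain ⟨t, htr, het⟩ := hesurj j hj
      obtain ⟨q, hq⟩ : ∃ q, r * q + s % r = s := ⟨s / r, Nat.div_add_mod s r⟩
      have hmr : s % r < r := Nat.mod_lt _ hrpos
      by_cases hts : s % r ≤ t
      · refine Finset.mem_image.mpr ⟨t - s % r, Finset.mem_range.mpr (by omega), ?_⟩
        rw [← het]
        apply hee
        have h1 : s + (t - s % r) = r * q + t := by omega
        rw [h1, Nat.mul_add_mod, Nat.mod_eq_of_lt htr]
      · refine Finset.mem_image.mpr ⟨t + r - s % r, Finset.mem_range.mpr (by omega), ?_⟩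
        rw [← het]
        apply hee
        have hq' : r * (q + 1) = r * q + r := by ring
        have h1 : s + (t + r - s % r) = r * (q + 1) + t := by omega
        rw [h1, Nat.mul_add_mod, Nat.mod_eq_of_lt htr]
  -- shift invariance of the window sums
  have H1 : ∀ F : ℕ → ℝ, (∀ t, F (t + r) = F t) →
      ∑ s ∈ Finset.range r, F (s + 1) = ∑ s ∈ Finset.range r, F s := by
    intro F hF
    have h2 : ∑ s ∈ Finset.range r, F (1 + s) = ∑ s ∈ Finset.Ico 1 (1 + r), F s := by
      rw [Finset.sum_Ico_eq_sum_range]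
      simp
    have h3 : ∑ s ∈ Finset.Ico 1 (1 + r), F s = ∑ s ∈ Finset.Ico 1 r, F s + F r := by
      rw [show 1 + r = r + 1 by ring, Finset.sum_Ico_succ_top hr1]
    have h4 : ∑ s ∈ Finset.range r, F s = F 0 + ∑ s ∈ Finset.Ico 1 r, F s := by
      rw [Finset.range_eq_Ico, Finset.sum_eq_sum_Ico_succ_bot hrpos]
    have h5 : F r = F 0 := by simpa using hF 0
    calc ∑ s ∈ Finset.range r, F (s + 1) = ∑ s ∈ Finset.range r, F (1 + s) := by
          apply Finset.sum_congr rfl; intro x _; rw [Nat.add_comm]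
      _ = ∑ s ∈ Finset.range r, F s := by rw [h2, h3, h4, h5]; ring
  have hshift : ∀ k, ∑ s ∈ Finset.range r, g (e (s + k)) = ∑ s ∈ Finset.range r, g (e s) := by
    intro k
    induction k with
    | zero => simp
    | succ k ih =>
      have := H1 (fun s => g (e (s + k))) (fun t => by
        show g (e (t + r + k)) = g (e (t + k))
        rw [show t + r + k = t + k + r by ring, heper])
      calc ∑ s ∈ Finset.range r, g (e (s + (k + 1)))
          = ∑ s ∈ Finset.range r, g (e ((s + 1) + k)) := by
            apply Finset.sum_congr rfl; intro x _; rw [show x + (k+1) = x + 1 + k by ring]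
        _ = ∑ s ∈ Finset.range r, g (e (s + k)) := this
        _ = ∑ s ∈ Finset.range r, g (e s) := ih
  have hDsum : ∑ s ∈ Finset.range r, g (e s) = ∑ j ∈ D, g j := by
    have himg0 : (Finset.range r).image (fun i => e i) = D := by
      have := himage 0
      simpa using this
    rw [← himg0]
    rw [Finset.sum_image]
    intro a ha b hb hab
    simp only [Finset.mem_coe, Finset.mem_range] at ha hb
    have h3 := heinj _ _ hab
    rwa [Nat.mod_eq_of_lt ha, Nat.mod_eq_of_lt hb] at h3
  have hmain : ∀ s, f T - f S ≤ ∑ l ∈ Finset.range r, c l * g (e (s + l)) := by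
    intro s
    have h0 := chain r le_rfl s
    rwa [himage s, hD, Finset.union_sdiff_of_subset hST.subset] at h0
  have hsum : (r : ℝ) * (f T - f S)
      ≤ (∑ l ∈ Finset.range r, c l) * ∑ j ∈ D, g j := by
    calc (r : ℝ) * (f T - f S) = ∑ _s ∈ Finset.range r, (f T - f S) := by
          rw [Finset.sum_const, Finset.card_range, nsmul_eq_mul]
      _ ≤ ∑ s ∈ Finset.range r, ∑ l ∈ Finset.range r, c l * g (e (s + l)) :=
          Finset.sum_le_sum (fun s _ => hmain s)
      _ = ∑ l ∈ Finset.range r, ∑ s ∈ Finset.range r, c l * g (e (s + l)) :=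
          Finset.sum_comm
      _ = ∑ l ∈ Finset.range r, c l * ∑ s ∈ Finset.range r, g (e (s + l)) := by
          apply Finset.sum_congr rfl; intro l _; rw [Finset.mul_sum]
      _ = ∑ l ∈ Finset.range r, c l * ∑ s ∈ Finset.range r, g (e s) := by
          apply Finset.sum_congr rfl; intro l _; rw [hshift l]
      _ = (∑ l ∈ Finset.range r, c l) * ∑ s ∈ Finset.range r, g (e s) :=
          (Finset.sum_mul _ _ _).symm
      _ = (∑ l ∈ Finset.range r, c l) * ∑ j ∈ D, g j := by rw [hDsum]
  have hcoef : ∑ l ∈ Finset.range r, c l = 1 + ∑ l ∈ Finset.Icc 1 (r - 1), C l := by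
    rw [Finset.range_eq_Ico, Finset.sum_eq_sum_Ico_succ_bot hrpos]
    have hIco : Finset.Ico 1 r = Finset.Icc 1 (r - 1) := by
      rw [show r = r - 1 + 1 by omega]
      exact Finset.Ico_add_one_right_eq_Icc 1 (r - 1)
    rw [hIco, show c 0 = 1 by simp [hc]]
    congr 1
    apply Finset.sum_congr rfl
    intro l hl
    have h1 : 1 ≤ l := (Finset.mem_Icc.mp hl).1
    simp [hc, Nat.pos_iff_ne_zero.mp h1]
  have hr0 : (0 : ℝ) < r := by exact_mod_cast hrpos
  rw [hcoef] at hsum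
  have h2 : f T - f S ≤ ((1 + ∑ l ∈ Finset.Icc 1 (r - 1), C l) * ∑ j ∈ D, g j) / r := by
    rw [le_div_iff₀ hr0, mul_comm]
    exact hsum
  calc f T - f S ≤ ((1 + ∑ l ∈ Finset.Icc 1 (r - 1), C l) * ∑ j ∈ D, g j) / r := h2
    _ = (1 / (r : ℝ)) * (1 + ∑ l ∈ Finset.Icc 1 (r - 1), C l) * ∑ j ∈ D, g j := by ring
end
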